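/- Let φ: K → M be a strong covering of finite simplicial complexes such that w_K(G)/w_K(H) = w_M(φ(G))/w_M(φ(H)) for every incidence H ∈ ∂G. If f is in the kernel of the i-down Laplace operator of M, then the lifted cochain f̄ defined by f̄([F]) = f([φ(F)]) · sgn([F],[φ(F)]) is in the kernel of the i-down Laplace operator of K. -/

import Mathlib

/-!
Factor `L_i^down = D W⁻¹ (Dᵀ W)`. For an `(i-1)`-face `H` of `K`, the covering sign identity
and the weight condition turn each term of `(Dᵀ W f̄)(H)` into the corresponding term of
`(Dᵀ W f)(φ H)`, so `(Dᵀ W f̄)(H) = n · sgn([H],[φH]) · w(H)/w(φH) · (Dᵀ W f)(φ H)`, where `n`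
counts the faces over an `i`-face of `M` containing `H`. Disjointness of the fibres gives
`n = 1` for `i > 0`; for `i = 0` (`H = ∅`) `n` is the number of sheets, constant since `K` is
connected. Finally `φ` maps the faces of `F` bijectively onto those of `φ F`, and the sign
identity once more gives `(L f̄)(F) = n · sgn([F],[φF]) · (L f)(φ F) = 0`.
-/

open Finset

variable {V : Type*} {W : Type*}

/-- An abstract simplicial complex: a collection of finite subsets of `V`
closed under taking subsets. -/
def IsComplex [DecidableEq V] (K : Finset (Finset V)) : Prop :=
  ∀ F ∈ K, ∀ G, G ⊆ F → G ∈ K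

/-- The 1-skeleton graph of a complex. -/
def oneSkeleton [DecidableEq V] (K : Finset (Finset V)) : SimpleGraph V where
  Adj u v := u ≠ v ∧ ({u, v} : Finset V) ∈ K
  symm := ⟨fun u v h => ⟨h.1.symm, by rw [Finset.pair_comm]; exact h.2⟩⟩
  loopless := ⟨fun u h => h.1 rfl⟩

/-- A strong covering of simplicial complexes `φ : K → M`:
`K` is a connected complex, `φ` is simplicial, the preimage of each face of `M`
is a disjoint union of faces of `K` each mapped bijectively onto it, and
incidences lift: whenever `G ∈ ∂ Gb` in `M` and `F ∈ φ⁻¹(G)`, there is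
`Fb` of `K` with `F ∈ ∂ Fb` and `φ(Fb) = Gb`. -/
structure StrongCovering [DecidableEq V] [DecidableEq W]
    (K : Finset (Finset V)) (M : Finset (Finset W)) (φ : V → W) : Prop where
  complexK : IsComplex K
  complexM : IsComplex M
  nonemptyK : K.Nonempty
  connectedK : ∀ u v : V, {u} ∈ K → {v} ∈ K → (oneSkeleton K).Reachable u v
  simplicial : ∀ F ∈ K, F.image φ ∈ M
  injOn : ∀ F ∈ K, Set.InjOn φ (F : Set V)
  disjointFibers : ∀ F ∈ K, ∀ F' ∈ K, F.image φ = F'.image φ → F ≠ F' → Disjoint F F'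
  surjFaces : ∀ G ∈ M, ∃ F ∈ K, F.image φ = G
  strong : ∀ G ∈ M, ∀ Gb ∈ M, G ⊆ Gb → Gb.card = G.card + 1 →
    ∀ F ∈ K, F.image φ = G → ∃ Fb ∈ K, F ⊆ Fb ∧ Fb.card = F.card + 1 ∧ Fb.image φ = Gb

/-- The canonical boundary sign `sgn([F], ∂[Fb])` with respect to the
orientations induced by the linear order on the vertices: it is `(−1)^j` if `F`
is obtained from `Fb` by deleting its `j`-th smallest vertex, and `0` if
`F ∉ ∂ Fb`. -/
def sgnBd [LinearOrder V] (F Fb : Finset V) : ℝ :=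
  if F ⊆ Fb ∧ Fb.card = F.card + 1 then
    (-1 : ℝ) ^ (∑ v ∈ Fb \ F, (F.filter (· < v)).card)
  else 0

/-- The matrix of the `i`-up Laplace operator
`L_i^up = W_i⁻¹ D_iᵀ W_{i+1} D_i` of a weighted complex `K`, with rows and
columns indexed by the `i`-faces of `K`. -/
noncomputable def lapUp [Fintype V] [LinearOrder V]
    (K : Finset (Finset V)) (w : Finset V → ℝ) (i : ℕ) :
    Matrix {F : Finset V // F ∈ K ∧ F.card = i + 1}
      {F : Finset V // F ∈ K ∧ F.card = i + 1} ℝ :=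
  fun F F' => (w F.1)⁻¹ *
    ∑ Fb : {B : Finset V // B ∈ K ∧ B.card = i + 2},
      w Fb.1 * sgnBd F.1 Fb.1 * sgnBd F'.1 Fb.1

/-- The matrix of the `i`-up Laplace operator of an incidence-signed complex
`(K, s)`: `L_i^up(K,s) = W_i⁻¹ (D_i^s)ᵀ W_{i+1} D_i^s` where
`(D_i^s)_{Fb,F} = sgn([F], ∂[Fb]) s(F, Fb)`. -/
noncomputable def lapUpSigned [Fintype V] [LinearOrder V]
    (K : Finset (Finset V)) (w : Finset V → ℝ)
    (s : Finset V → Finset V → ℝ) (i : ℕ) :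
    Matrix {F : Finset V // F ∈ K ∧ F.card = i + 1}
      {F : Finset V // F ∈ K ∧ F.card = i + 1} ℝ :=
  fun F F' => (w F.1)⁻¹ *
    ∑ Fb : {B : Finset V // B ∈ K ∧ B.card = i + 2},
      w Fb.1 * (sgnBd F.1 Fb.1 * s F.1 Fb.1) * (sgnBd F'.1 Fb.1 * s F'.1 Fb.1)

/-- The matrix of the `i`-down Laplace operator
`L_i^down = D_{i-1} W_{i-1}⁻¹ D_{i-1}ᵀ W_i` of a weighted complex `K`
(the `(i-1)`-faces have cardinality `i`; for `i = 0` this is the empty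
simplex, giving the augmented/reduced version). -/
noncomputable def lapDown [Fintype V] [LinearOrder V]
    (K : Finset (Finset V)) (w : Finset V → ℝ) (i : ℕ) :
    Matrix {F : Finset V // F ∈ K ∧ F.card = i + 1}
      {F : Finset V // F ∈ K ∧ F.card = i + 1} ℝ :=
  fun F F' =>
    (∑ H : {H : Finset V // H ∈ K ∧ H.card = i},
      sgnBd H.1 F.1 * (w H.1)⁻¹ * sgnBd H.1 F'.1) * w F'.1

/-- The sign `sgn([F], [φ(F)])` comparing the canonical orientation of a face
`F` with the orientation its image `φ(F)` inherits from `φ`: it is the sign of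
the permutation sorting the `φ`-image of the sorted vertex list of `F`,
computed as the parity of the number of inversions. -/
def sgnMap {W : Type*} [LinearOrder V] [LinearOrder W] (φ : V → W) (F : Finset V) : ℝ :=
  (-1 : ℝ) ^ ((F ×ˢ F).filter fun p => p.1 < p.2 ∧ φ p.2 < φ p.1).card

section Signs

variable [LinearOrder V] [LinearOrder W]

lemma sgnBd_of_not_subset {H F : Finset V} (h : ¬ H ⊆ F) : sgnBd H F = 0 := by
  simp [sgnBd, h]

lemma sgnBd_insert {H : Finset V} {x : V} (hx : x ∉ H) :
    sgnBd H (insert x H) = (-1 : ℝ) ^ (H.filter (· < x)).card := by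
  rw [sgnBd, if_pos ⟨subset_insert x H, card_insert_of_notMem hx⟩,
    insert_sdiff_cancel hx, sum_singleton]

lemma card_inversions_insert (φ : V → W) {H : Finset V} {x : V} (hx : x ∉ H) :
    ((insert x H ×ˢ insert x H).filter fun p => p.1 < p.2 ∧ φ p.2 < φ p.1).card
      = ((H ×ˢ H).filter fun p => p.1 < p.2 ∧ φ p.2 < φ p.1).card
        + (H.filter fun h => x < h ∧ φ h < φ x).card
        + (H.filter fun h => h < x ∧ φ x < φ h).card := by
  simp only [card_filter, sum_product, sum_insert hx, lt_irrefl, false_and, if_false,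
    zero_add, sum_add_distrib]
  omega

lemma sgnMap_insert (φ : V → W) {H : Finset V} {x : V} (hx : x ∉ H) :
    sgnMap φ (insert x H) = sgnMap φ H * (-1 : ℝ) ^ ((H.filter fun h => x < h ∧ φ h < φ x).card
      + (H.filter fun h => h < x ∧ φ x < φ h).card) := by
  rw [sgnMap, sgnMap, card_inversions_insert φ hx, add_assoc, pow_add]

lemma sgnMap_mul_self (φ : V → W) (F : Finset V) : sgnMap φ F * sgnMap φ F = 1 := by
  rw [sgnMap, ← pow_add]
  exact Even.neg_one_pow ⟨_, rfl⟩

theorem sgnBd_mul_sgnMap {φ : V → W} {H F : Finset V} (hHF : H ⊆ F)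
    (hinj : Set.InjOn φ F) :
    sgnBd H F * sgnMap φ F = sgnBd (H.image φ) (F.image φ) * sgnMap φ H := by
  have hcard : ∀ A ⊆ F, (A.image φ).card = A.card := fun A hA =>
    card_image_of_injOn (hinj.mono (coe_subset.mpr hA))
  by_cases hFH : F.card = H.card + 1
  swap
  · have hφ : ¬ (F.image φ).card = (H.image φ).card + 1 := by
      rwa [hcard F subset_rfl, hcard H hHF]
    simp [sgnBd, hFH, hφ]
  obtain ⟨x, hxH, rfl⟩ : ∃ x ∉ H, F = insert x H := by
    obtain ⟨x, hx⟩ := card_eq_one.mp (show (F \ H).card = 1 by rw [card_sdiff_of_subset hHF]; omega)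
    have hxF : x ∈ F \ H := hx ▸ mem_singleton_self x
    refine ⟨x, (mem_sdiff.mp hxF).2, ?_⟩
    rw [← sdiff_union_of_subset hHF, hx, insert_eq]
  have hφx : ∀ h ∈ H, φ h ≠ φ x := fun h hh he =>
    hxH (hinj (by simp [hh]) (by simp) he ▸ hh)
  have hφxH : φ x ∉ H.image φ := by
    simpa only [mem_image, not_exists, not_and] using hφx
  have hlt : (H.filter fun h => φ h < φ x).card = ((H.image φ).filter (· < φ x)).card := by
    rw [filter_image, hcard _ ((filter_subset _ _).trans hHF)]
  have hparity : (H.filter (· < x)).card + ((H.filter fun h => x < h ∧ φ h < φ x).card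
        + (H.filter fun h => h < x ∧ φ x < φ h).card)
      = (H.filter fun h => φ h < φ x).card + 2 * (H.filter fun h => h < x ∧ φ x < φ h).card := by
    simp only [card_filter, mul_sum, ← sum_add_distrib]
    refine sum_congr rfl fun h hh => ?_
    have hhx : h ≠ x := fun e => hxH (e ▸ hh)
    rcases hhx.lt_or_gt with h1 | h1 <;> rcases (hφx h hh).lt_or_gt with h2 | h2 <;>
      simp [h1, h2, h1.not_gt, h2.not_gt]
  rw [sgnBd_insert hxH, image_insert, sgnBd_insert hφxH, sgnMap_insert φ hxH, ← hlt,
    mul_left_comm, ← pow_add, hparity, pow_add, pow_mul, neg_one_sq, one_pow, mul_one, mul_comm]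

end Signs

lemma image_filter_mem_image [DecidableEq W] {φ : V → W} {F : Finset V} {G : Finset W}
    (hGF : G ⊆ F.image φ) :
    (F.filter (φ · ∈ G)).image φ = G := by
  rw [← filter_image (p := (· ∈ G)), filter_mem_eq_inter, inter_eq_right.mpr hGF]

lemma filter_mem_image_of_injOn [DecidableEq W] {φ : V → W} {F H : Finset V}
    (hinj : Set.InjOn φ F) (hHF : H ⊆ F) :
    F.filter (φ · ∈ H.image φ) = H := by
  ext v
  simp only [mem_filter, mem_image]
  constructor
  · rintro ⟨hv, u, hu, huv⟩
    exact hinj (hHF hu) hv huv ▸ hu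
  · exact fun hv => ⟨hHF hv, v, hv, rfl⟩

def lifts [DecidableEq W] (K : Finset (Finset V)) (φ : V → W) (G : Finset W) :
    Finset (Finset V) :=
  K.filter (·.image φ = G)

namespace StrongCovering

variable [DecidableEq V] [DecidableEq W] {K : Finset (Finset V)} {M : Finset (Finset W)}
  {φ : V → W}

lemma card_image {F : Finset V} (hc : StrongCovering K M φ) (hF : F ∈ K) :
    (F.image φ).card = F.card :=
  card_image_of_injOn (hc.injOn F hF)

lemma eq_of_image_eq_of_not_disjoint {F F' : Finset V} (hc : StrongCovering K M φ)
    (hF : F ∈ K) (hF' : F' ∈ K) (himage : F.image φ = F'.image φ) (hFF' : ¬ Disjoint F F') :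
    F = F' := by
  by_contra hne
  exact hFF' (hc.disjointFibers F hF F' hF' himage hne)

lemma card_filter_lifts_superset {H : Finset V} {G : Finset W} (hc : StrongCovering K M φ)
    (hH : H ∈ K) (hHne : H.Nonempty) (hG : G ∈ M) (hGcard : G.card = H.card + 1)
    (hHG : H.image φ ⊆ G) :
    ((lifts K φ G).filter (H ⊆ ·)).card = 1 := by
  obtain ⟨F, hF, hHF, -, hFG⟩ := hc.strong _ (hc.simplicial H hH) G hG hHG
    (by rw [hGcard, hc.card_image hH]) H hH rfl
  refine card_eq_one.mpr ⟨F, eq_singleton_iff_unique_mem.mpr ⟨by simp [lifts, hF, hHF, hFG], ?_⟩⟩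
  intro F' hF'
  simp only [lifts, mem_filter] at hF'
  obtain ⟨v, hv⟩ := hHne
  exact hc.eq_of_image_eq_of_not_disjoint hF'.1.1 hF (hF'.1.2.trans hFG.symm)
    (not_disjoint_iff.mpr ⟨v, hF'.2 hv, hHF hv⟩)

/-- `Fb ↦ Fb ∩ φ⁻¹(G)` is a bijection from the faces over `Gb` onto the faces over `G`. -/
lemma card_lifts_eq_of_subset {G Gb : Finset W} (hc : StrongCovering K M φ) (hG : G ∈ M)
    (hGne : G.Nonempty) (hGb : Gb ∈ M) (hGGb : G ⊆ Gb) (hcard : Gb.card = G.card + 1) :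
    (lifts K φ Gb).card = (lifts K φ G).card := by
  have himage : ∀ Fb ∈ lifts K φ Gb, (Fb.filter (φ · ∈ G)).image φ = G := fun Fb hFb =>
    image_filter_mem_image ((mem_filter.mp hFb).2 ▸ hGGb)
  have hmem : ∀ Fb ∈ lifts K φ Gb, Fb.filter (φ · ∈ G) ∈ K := fun Fb hFb =>
    hc.complexK Fb (mem_filter.mp hFb).1 _ (filter_subset _ _)
  refine card_nbij (fun Fb => Fb.filter (φ · ∈ G))
    (fun Fb hFb => mem_filter.mpr ⟨hmem Fb hFb, himage Fb hFb⟩) ?_ ?_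
  · intro Fb₁ h₁ Fb₂ h₂ heq
    obtain ⟨v, hv⟩ : (Fb₁.filter (φ · ∈ G)).Nonempty := by
      rw [← image_nonempty (f := φ), himage Fb₁ h₁]; exact hGne
    have hv₂ : v ∈ Fb₂.filter (φ · ∈ G) := by simp only at heq; rwa [← heq]
    exact hc.eq_of_image_eq_of_not_disjoint (mem_filter.mp h₁).1 (mem_filter.mp h₂).1
      ((mem_filter.mp h₁).2.trans (mem_filter.mp h₂).2.symm)
      (not_disjoint_iff.mpr ⟨v, (mem_filter.mp hv).1, (mem_filter.mp hv₂).1⟩)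
  · intro F hF
    obtain ⟨hFK, hFG⟩ := mem_filter.mp hF
    obtain ⟨Fb, hFbK, hFFb, -, hFbGb⟩ := hc.strong G hG Gb hGb hGGb hcard F hFK hFG
    have hFbmem : Fb ∈ lifts K φ Gb := mem_filter.mpr ⟨hFbK, hFbGb⟩
    refine ⟨Fb, hFbmem, (eq_of_subset_of_card_le ?_ ?_).symm⟩
    · intro v hv
      exact mem_filter.mpr ⟨hFFb hv, hFG ▸ mem_image_of_mem φ hv⟩
    · rw [← hc.card_image (hmem Fb hFbmem), himage Fb hFbmem, ← hFG, hc.card_image hFK]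

lemma exists_vertex_lift {u : W} (hc : StrongCovering K M φ) (hu : {u} ∈ M) :
    ∃ v, {v} ∈ K ∧ φ v = u := by
  obtain ⟨F, hF, hFu⟩ := hc.surjFaces {u} hu
  obtain ⟨v, rfl⟩ := card_eq_one.mp (by rw [← hc.card_image hF, hFu, card_singleton])
  exact ⟨v, hF, by simpa using hFu⟩

def skeletonHom (hc : StrongCovering K M φ) : oneSkeleton K →g oneSkeleton M where
  toFun := φ
  map_rel' := by
    rintro a b ⟨hab, habK⟩
    refine ⟨fun h => hab (hc.injOn _ habK (by simp) (by simp) h), ?_⟩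
    simpa using hc.simplicial _ habK

lemma card_lifts_singleton_eq_of_adj {u u' : W} (hc : StrongCovering K M φ)
    (hadj : (oneSkeleton M).Adj u u') :
    (lifts K φ {u}).card = (lifts K φ {u'}).card := by
  obtain ⟨hne, he⟩ := hadj
  have hcard : ∀ {a b : W}, a ≠ b → ({a, b} : Finset W).card = ({a} : Finset W).card + 1 :=
    fun hab => card_pair hab
  rw [← hc.card_lifts_eq_of_subset (hc.complexM _ he _ (by simp)) (by simp) he (by simp)
    (hcard hne), pair_comm, hc.card_lifts_eq_of_subset (hc.complexM _ he _ (by simp)) (by simp)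
    (pair_comm u u' ▸ he) (by simp) (hcard hne.symm)]

lemma card_lifts_singleton_eq_of_reachable {u u' : W} (hc : StrongCovering K M φ)
    (h : (oneSkeleton M).Reachable u u') :
    (lifts K φ {u}).card = (lifts K φ {u'}).card := by
  obtain ⟨p⟩ := h
  induction p with
  | nil => rfl
  | cons hadj _ ih => exact (hc.card_lifts_singleton_eq_of_adj hadj).trans ih

lemma card_lifts_singleton_eq {u u' : W} (hc : StrongCovering K M φ) (hu : {u} ∈ M)
    (hu' : {u'} ∈ M) :
    (lifts K φ {u}).card = (lifts K φ {u'}).card := by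
  obtain ⟨v, hv, rfl⟩ := hc.exists_vertex_lift hu
  obtain ⟨v', hv', rfl⟩ := hc.exists_vertex_lift hu'
  exact hc.card_lifts_singleton_eq_of_reachable ((hc.connectedK v v' hv hv').map hc.skeletonHom)

/-- `n = 1` for `i > 0`; for `i = 0` it is the number of sheets, the same over every vertex
because `K` is connected. -/
lemma exists_card_filter_lifts_eq (hc : StrongCovering K M φ) (i : ℕ) :
    ∃ n : ℕ, ∀ H ∈ K, H.card = i → ∀ G ∈ M, G.card = i + 1 → H.image φ ⊆ G →
      ((lifts K φ G).filter (H ⊆ ·)).card = n := by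
  rcases i with _ | i
  · by_cases hvert : ∃ u, {u} ∈ M
    · obtain ⟨u, hu⟩ := hvert
      refine ⟨(lifts K φ {u}).card, fun H _ hH G hG hGcard _ => ?_⟩
      obtain ⟨u', rfl⟩ := card_eq_one.mp hGcard
      rw [card_eq_zero.mp hH, filter_true_of_mem fun _ _ => empty_subset _]
      exact hc.card_lifts_singleton_eq hG hu
    · refine ⟨0, fun H _ _ G hG hGcard _ => absurd ?_ hvert⟩
      obtain ⟨u, rfl⟩ := card_eq_one.mp hGcard
      exact ⟨u, hG⟩
  · exact ⟨1, fun H hH hHi G hG hGcard hHG => hc.card_filter_lifts_superset hH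
      (card_pos.mp (by omega)) hG (by omega) hHG⟩

lemma sum_filter_superset_image {H : Finset V} {n : ℕ} (hc : StrongCovering K M φ)
    (hn : ∀ G ∈ M, G.card = H.card + 1 → H.image φ ⊆ G →
      ((lifts K φ G).filter (H ⊆ ·)).card = n)
    (g : Finset W → ℝ) :
    ∑ F ∈ (K.filter (·.card = H.card + 1)).filter (H ⊆ ·), g (F.image φ)
      = n * ∑ G ∈ (M.filter (·.card = H.card + 1)).filter (H.image φ ⊆ ·), g G := by
  have hmaps : ∀ F ∈ (K.filter (·.card = H.card + 1)).filter (H ⊆ ·),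
      F.image φ ∈ (M.filter (·.card = H.card + 1)).filter (H.image φ ⊆ ·) := by
    intro F hF
    simp only [mem_filter] at hF ⊢
    exact ⟨⟨hc.simplicial F hF.1.1, by rw [hc.card_image hF.1.1, hF.1.2]⟩,
      image_subset_image hF.2⟩
  rw [← sum_fiberwise_of_maps_to hmaps, mul_sum]
  refine sum_congr rfl fun G hG => ?_
  simp only [mem_filter] at hG
  have hfiber : ((K.filter (·.card = H.card + 1)).filter (H ⊆ ·)).filter (·.image φ = G)
      = (lifts K φ G).filter (H ⊆ ·) := by
    ext F
    simp only [lifts, mem_filter]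
    constructor
    · rintro ⟨⟨⟨hF, -⟩, hHF⟩, hFG⟩
      exact ⟨⟨hF, hFG⟩, hHF⟩
    · rintro ⟨⟨hF, hFG⟩, hHF⟩
      exact ⟨⟨⟨hF, by rw [← hc.card_image hF, hFG, hG.1.2]⟩, hHF⟩, hFG⟩
  rw [sum_congr rfl fun F hF => congrArg g (mem_filter.mp hF).2, sum_const, hfiber,
    hn G hG.1.1 hG.1.2 hG.2, nsmul_eq_mul]

end StrongCovering

section Laplacian

variable [LinearOrder V] [LinearOrder W]

/-- `(D_{i-1}ᵀ W_i g)(H)`, the coefficient of `[H]` in the boundary of the chain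
`Σ_F w(F) g(F) [F]` over the `i`-faces; thus
`L_i^down g = D_{i-1} W_{i-1}⁻¹ (weightedBoundary K w g i)`. -/
def weightedBoundary (K : Finset (Finset V)) (w g : Finset V → ℝ) (i : ℕ) (H : Finset V) : ℝ :=
  ∑ F ∈ K.filter (·.card = i + 1), sgnBd H F * w F * g F

lemma sum_down_eq_sum_weightedBoundary (K : Finset (Finset V)) (w g : Finset V → ℝ) (i : ℕ)
    (F : Finset V) :
    ∑ F' ∈ K.filter (fun X => X.card = i + 1),
        (∑ H ∈ K.filter (fun X => X.card = i), sgnBd H F * (w H)⁻¹ * sgnBd H F') * w F' * g F'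
      = ∑ H ∈ K.filter (fun X => X.card = i), sgnBd H F * (w H)⁻¹ * weightedBoundary K w g i H := by
  simp only [weightedBoundary, sum_mul, mul_sum]
  rw [sum_comm]
  exact sum_congr rfl fun _ _ => sum_congr rfl fun _ _ => by ring

lemma weightedBoundary_eq_sum_filter_subset (K : Finset (Finset V)) (w g : Finset V → ℝ)
    (i : ℕ) (H : Finset V) :
    weightedBoundary K w g i H
      = ∑ F ∈ (K.filter (·.card = i + 1)).filter (H ⊆ ·), sgnBd H F * w F * g F := by
  refine (sum_filter_of_ne fun F _ hne => ?_).symm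
  by_contra hHF
  simp [sgnBd_of_not_subset hHF] at hne

lemma sum_filter_card_sgnBd_mul (K : Finset (Finset V)) (hK : IsComplex K) {F : Finset V}
    (hF : F ∈ K) (k : ℕ) (g : Finset V → ℝ) :
    ∑ H ∈ K.filter (·.card = k), sgnBd H F * g H = ∑ H ∈ F.powersetCard k, sgnBd H F * g H := by
  refine (sum_subset (fun H hH => ?_) fun H hH hHF => ?_).symm
  · obtain ⟨hHF, hHk⟩ := mem_powersetCard.mp hH
    exact mem_filter.mpr ⟨hK F hF H hHF, hHk⟩
  · rw [sgnBd_of_not_subset fun h => hHF (mem_powersetCard.mpr ⟨h, (mem_filter.mp hH).2⟩),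
      zero_mul]

namespace StrongCovering

variable {K : Finset (Finset V)} {M : Finset (Finset W)} {φ : V → W}

lemma weightedBoundary_lift {wK : Finset V → ℝ} {wM f : Finset W → ℝ} {H : Finset V} {i n : ℕ}
    (hc : StrongCovering K M φ) (hH : H ∈ K) (hHi : H.card = i) (hwH : wK H ≠ 0)
    (hw : ∀ F ∈ K, H ⊆ F → F.card = H.card + 1 →
      wK F / wK H = wM (F.image φ) / wM (H.image φ))
    (hn : ∀ G ∈ M, G.card = i + 1 → H.image φ ⊆ G → ((lifts K φ G).filter (H ⊆ ·)).card = n) :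
    weightedBoundary K wK (fun F => f (F.image φ) * sgnMap φ F) i H
      = n * sgnMap φ H * (wK H / wM (H.image φ)) * weightedBoundary M wM f i (H.image φ) := by
  subst hHi
  have hterm : ∀ F ∈ (K.filter (·.card = H.card + 1)).filter (H ⊆ ·),
      sgnBd H F * wK F * (f (F.image φ) * sgnMap φ F)
        = sgnMap φ H * (wK H / wM (H.image φ))
          * (sgnBd (H.image φ) (F.image φ) * wM (F.image φ) * f (F.image φ)) := by
    intro F hF
    simp only [mem_filter] at hF
    obtain ⟨⟨hFK, hFcard⟩, hHF⟩ := hF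
    have hwF : wK F = wK H * (wM (F.image φ) / wM (H.image φ)) := by
      rw [← hw F hFK hHF hFcard, mul_div_cancel₀ _ hwH]
    rw [hwF]
    linear_combination (wK H * (wM (F.image φ) / wM (H.image φ)) * f (F.image φ))
      * sgnBd_mul_sgnMap hHF (hc.injOn F hFK)
  rw [weightedBoundary_eq_sum_filter_subset, weightedBoundary_eq_sum_filter_subset,
    sum_congr rfl hterm, ← mul_sum,
    hc.sum_filter_superset_image hn fun G => sgnBd (H.image φ) G * wM G * f G, ← hc.card_image hH]
  ring

lemma sum_sgnBd_mul_sgnMap_image {F : Finset V} (hc : StrongCovering K M φ) (hF : F ∈ K)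
    (k : ℕ) (c : Finset W → ℝ) :
    ∑ H ∈ K.filter (·.card = k), sgnBd H F * sgnMap φ H * c (H.image φ)
      = sgnMap φ F * ∑ G ∈ M.filter (·.card = k), sgnBd G (F.image φ) * c G := by
  have hinj := hc.injOn F hF
  simp only [mul_assoc]
  rw [sum_filter_card_sgnBd_mul K hc.complexK hF,
    sum_filter_card_sgnBd_mul M hc.complexM (hc.simplicial F hF), mul_sum]
  refine sum_nbij' (image φ) (fun G => F.filter (φ · ∈ G)) (fun H hH => ?_) (fun G hG => ?_)
    (fun H hH => ?_) (fun G hG => ?_) (fun H hH => ?_)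
  · obtain ⟨hHF, hHk⟩ := mem_powersetCard.mp hH
    exact mem_powersetCard.mpr ⟨image_subset_image hHF,
      by rw [card_image_of_injOn (hinj.mono (coe_subset.mpr hHF)), hHk]⟩
  · obtain ⟨hGF, hGk⟩ := mem_powersetCard.mp hG
    refine mem_powersetCard.mpr ⟨filter_subset _ _, ?_⟩
    rw [← card_image_of_injOn (hinj.mono (coe_subset.mpr (filter_subset _ _))),
      image_filter_mem_image hGF, hGk]
  · exact filter_mem_image_of_injOn hinj (mem_powersetCard.mp hH).1
  · exact image_filter_mem_image (mem_powersetCard.mp hG).1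
  · have hsign := sgnBd_mul_sgnMap (mem_powersetCard.mp hH).1 hinj
    linear_combination (sgnMap φ F * sgnMap φ H * c (H.image φ)) * hsign
      - sgnBd H F * sgnMap φ H * c (H.image φ) * sgnMap_mul_self φ F
      + sgnBd (H.image φ) (F.image φ) * sgnMap φ F * c (H.image φ) * sgnMap_mul_self φ H

end StrongCovering

end Laplacian

theorem lift_kernel_down_laplacian_general [LinearOrder V] [LinearOrder W]
    (K : Finset (Finset V)) (M : Finset (Finset W)) (φ : V → W)
    (hc : StrongCovering K M φ)
    (wK : Finset V → ℝ) (wM : Finset W → ℝ)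
    (hwK : ∀ F ∈ K, 0 < wK F)
    (hw : ∀ H ∈ K, ∀ G ∈ K, H ⊆ G → G.card = H.card + 1 →
      wK G / wK H = wM (G.image φ) / wM (H.image φ))
    (i : ℕ) (f : Finset W → ℝ)
    (hf : ∀ G ∈ M, G.card = i + 1 →
      ∑ G' ∈ M.filter (fun X => X.card = i + 1),
        (∑ H ∈ M.filter (fun X => X.card = i),
          sgnBd H G * (wM H)⁻¹ * sgnBd H G') * wM G' * f G' = 0) :
    ∀ F ∈ K, F.card = i + 1 →
      ∑ F' ∈ K.filter (fun X => X.card = i + 1),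
        (∑ H ∈ K.filter (fun X => X.card = i),
          sgnBd H F * (wK H)⁻¹ * sgnBd H F') * wK F' * (f (F'.image φ) * sgnMap φ F') = 0 := by
  intro F hF hFi
  obtain ⟨n, hn⟩ := hc.exists_card_filter_lifts_eq i
  calc _ = ∑ H ∈ K.filter (fun X => X.card = i), sgnBd H F * sgnMap φ H
          * (n * ((wM (H.image φ))⁻¹ * weightedBoundary M wM f i (H.image φ))) := by
        rw [sum_down_eq_sum_weightedBoundary]
        refine sum_congr rfl fun H hH => ?_
        obtain ⟨hHK, hHi⟩ := mem_filter.mp hH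
        have hwH := (hwK H hHK).ne'
        rw [hc.weightedBoundary_lift hHK hHi hwH (hw H hHK) (hn H hHK hHi)]
        field_simp
    _ = sgnMap φ F * n * ∑ G ∈ M.filter (fun X => X.card = i),
          sgnBd G (F.image φ) * (wM G)⁻¹ * weightedBoundary M wM f i G := by
        rw [hc.sum_sgnBd_mul_sgnMap_image hF i
            fun G => n * ((wM G)⁻¹ * weightedBoundary M wM f i G),
          mul_assoc, mul_sum (s := M.filter _) (a := (n : ℝ))]
        exact congrArg _ (sum_congr rfl fun G _ => by ring)
    _ = 0 := by
        rw [← sum_down_eq_sum_weightedBoundary, hf _ (hc.simplicial F hF)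
          (by rw [hc.card_image hF, hFi]), mul_zero]

/-- for a strong covering `φ : K → M` whose weights satisfy
`w_K(G)/w_K(H) = w_M(φ(G))/w_M(φ(H))` on incidences `H ∈ ∂G`, the sign-twisted
lift `f̄([F]) = f([φ(F)]) sgn([F],[φ(F)])` of any cochain `f` in the kernel of
`L_i^down(M)` lies in the kernel of `L_i^down(K)`. -/
theorem lift_kernel_down_laplacian [Fintype V] [LinearOrder V]
    [Fintype W] [LinearOrder W]
    (K : Finset (Finset V)) (M : Finset (Finset W)) (φ : V → W)
    (hc : StrongCovering K M φ)
    (wK : Finset V → ℝ) (wM : Finset W → ℝ)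
    (hwK : ∀ F ∈ K, 0 < wK F) (hwM : ∀ G ∈ M, 0 < wM G)
    (hw : ∀ H ∈ K, ∀ G ∈ K, H ⊆ G → G.card = H.card + 1 →
      wK G / wK H = wM (G.image φ) / wM (H.image φ))
    (i : ℕ) (f : Finset W → ℝ)
    (hf : ∀ G ∈ M, G.card = i + 1 →
      ∑ G' ∈ M.filter (fun X => X.card = i + 1),
        (∑ H ∈ M.filter (fun X => X.card = i),
          sgnBd H G * (wM H)⁻¹ * sgnBd H G') * wM G' * f G' = 0) :
    ∀ F ∈ K, F.card = i + 1 →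
      ∑ F' ∈ K.filter (fun X => X.card = i + 1),
        (∑ H ∈ K.filter (fun X => X.card = i),
          sgnBd H F * (wK H)⁻¹ * sgnBd H F') * wK F' * (f (F'.image φ) * sgnMap φ F') = 0 :=
  lift_kernel_down_laplacian_general K M φ hc wK wM hwK hw i f hf
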